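/- Let N be a random variable with the Poisson distribution of mean 1, set U = N − 1 and V = (N − 1)² − N. Then there exists a real number α* such that the normalized random variable S = (U + α*V)/√(1 + 2α*²) satisfies E[S²] = 1, E[S⁴] = 3 and E[S³] ≠ 0. -/

import Mathlib

/-!
The factorial moments of a Poisson(1) variable are all `E[(N)_k] = 1`. Expanding the powers of
`W = U + αV` in the falling-factorial basis gives `E[W²] = 1 + 2α²`,
`E[W³] = 1 + 6α + 12α² + 12α³` and `E[W⁴] = 4 + 24α + 108α² + 224α³ + 212α⁴`.
The condition `E[S⁴] = 3`, i.e. `E[W⁴] = 3 E[W²]²`, is the quartic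
`200α⁴ + 224α³ + 96α² + 24α + 1 = 0`, which changes sign on `[-3/50, -1/20]`;
on that interval `E[W³] > 0`.
-/

open MeasureTheory ProbabilityTheory Real Finset
open scoped NNReal Nat

lemma hasLaw_poissonMeasure_of_measure_eq {Ω : Type*} [MeasurableSpace Ω] {μ : Measure Ω}
    {N : Ω → ℕ} (hN : Measurable N) {r : ℝ≥0}
    (hlaw : ∀ k : ℕ, μ {ω | N ω = k} = ENNReal.ofReal (exp (-r) * r ^ k / k !)) :
    HasLaw N Po(r) μ where
  aemeasurable := hN.aemeasurable
  map_eq := Measure.ext_of_singleton fun k ↦ by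
    rw [Measure.map_apply hN (measurableSet_singleton k), poissonMeasure_singleton]
    exact hlaw k

lemma hasSum_mul_descFactorial_poissonMeasure (r : ℝ≥0) (k : ℕ) :
    HasSum (fun n ↦ exp (-r) * r ^ n / n ! * (n.descFactorial k : ℝ)) (r ^ k) := by
  rw [← hasSum_nat_add_iff' k]
  have below : ∑ n ∈ range k, exp (-r) * r ^ n / n ! * (n.descFactorial k : ℝ) = 0 :=
    sum_eq_zero fun n hn ↦ by simp [Nat.descFactorial_of_lt (mem_range.1 hn)]
  have shift (n : ℕ) : exp (-r) * r ^ (n + k) / (n + k)! * ((n + k).descFactorial k : ℝ)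
      = r ^ k * (exp (-r) * r ^ n / n !) := by
    have hfact := Nat.factorial_mul_descFactorial (Nat.le_add_left k n)
    rw [Nat.add_sub_cancel] at hfact
    rw [← hfact]
    push_cast
    have : (n ! : ℝ) ≠ 0 := by positivity
    have : ((n + k).descFactorial k : ℝ) ≠ 0 := by
      exact_mod_cast (Nat.descFactorial_pos.2 (Nat.le_add_left k n)).ne'
    field_simp
    ring
  simpa [below, shift] using (hasSum_one_poissonMeasure r).mul_left ((r : ℝ) ^ k)

lemma integrable_descFactorial_poissonMeasure (r : ℝ≥0) (k : ℕ) :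
    Integrable (fun n : ℕ ↦ (n.descFactorial k : ℝ)) Po(r) :=
  integrable_poissonMeasure_iff.2 <| by
    simpa using (hasSum_mul_descFactorial_poissonMeasure r k).summable

lemma integral_descFactorial_poissonMeasure (r : ℝ≥0) (k : ℕ) :
    ∫ n, (n.descFactorial k : ℝ) ∂Po(r) = r ^ k := by
  rw [integral_poissonMeasure]
  exact (hasSum_mul_descFactorial_poissonMeasure r k).tsum_eq

lemma integral_poissonMeasure_of_eq_sum_descFactorial {r : ℝ≥0} {f : ℕ → ℝ} {m : ℕ}
    (c : Fin m → ℝ) (hf : ∀ n, f n = ∑ i, c i * (n.descFactorial i : ℝ)) :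
    ∫ n, f n ∂Po(r) = ∑ i, c i * (r : ℝ) ^ (i : ℕ) := by
  simp_rw [hf]
  rw [integral_finsetSum _ fun (i : Fin m) _ ↦
    (integrable_descFactorial_poissonMeasure r i).const_mul (c i)]
  simp only [integral_const_mul, integral_descFactorial_poissonMeasure]

lemma cast_descFactorial_eq_prod (n k : ℕ) :
    (n.descFactorial k : ℝ) = ∏ i ∈ range k, ((n : ℝ) - i) := by
  rw [← descPochhammer_eval_eq_descFactorial]
  induction k with
  | zero => simp
  | succ k ih => rw [descPochhammer_succ_eval, ih, prod_range_succ]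

lemma integral_sq_poissonMeasure_one (α : ℝ) :
    ∫ n, ((n - 1 : ℝ) + α * ((n - 1 : ℝ) ^ 2 - n)) ^ 2 ∂Po(1) = 1 + 2 * α ^ 2 := by
  rw [integral_poissonMeasure_of_eq_sum_descFactorial
    ![1 - 2 * α + α ^ 2, -1 + 2 * α, 1 - 2 * α, 2 * α, α ^ 2]]
  · simp only [NNReal.coe_one, one_pow, mul_one, Fin.sum_univ_succ, Fin.sum_univ_zero,
      Matrix.cons_val_zero, Matrix.cons_val_succ]
    ring
  · intro n
    simp only [Fin.sum_univ_succ, Fin.sum_univ_zero, Matrix.cons_val_zero, Matrix.cons_val_succ,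
      Fin.val_zero, Fin.val_succ, cast_descFactorial_eq_prod, prod_range_succ, prod_range_zero]
    push_cast
    ring

lemma integral_pow_three_poissonMeasure_one (α : ℝ) :
    ∫ n, ((n - 1 : ℝ) + α * ((n - 1 : ℝ) ^ 2 - n)) ^ 3 ∂Po(1)
      = 1 + 6 * α + 12 * α ^ 2 + 12 * α ^ 3 := by
  rw [integral_poissonMeasure_of_eq_sum_descFactorial
    ![-1 + 3 * α - 3 * α ^ 2 + α ^ 3, 1 - 3 * α + 3 * α ^ 2 - 2 * α ^ 3, α ^ 3, 1 + 3 * α,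
      3 * α + 9 * α ^ 2 + 5 * α ^ 3, 3 * α ^ 2 + 6 * α ^ 3, α ^ 3]]
  · simp only [NNReal.coe_one, one_pow, mul_one, Fin.sum_univ_succ, Fin.sum_univ_zero,
      Matrix.cons_val_zero, Matrix.cons_val_succ]
    ring
  · intro n
    simp only [Fin.sum_univ_succ, Fin.sum_univ_zero, Matrix.cons_val_zero, Matrix.cons_val_succ,
      Fin.val_zero, Fin.val_succ, cast_descFactorial_eq_prod, prod_range_succ, prod_range_zero]
    push_cast
    ring

lemma integral_pow_four_poissonMeasure_one (α : ℝ) :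
    ∫ n, ((n - 1 : ℝ) + α * ((n - 1 : ℝ) ^ 2 - n)) ^ 4 ∂Po(1)
      = 4 + 24 * α + 108 * α ^ 2 + 224 * α ^ 3 + 212 * α ^ 4 := by
  rw [integral_poissonMeasure_of_eq_sum_descFactorial
    ![1 - 4 * α + 6 * α ^ 2 - 4 * α ^ 3 + α ^ 4, -1 + 4 * α - 6 * α ^ 2 + 4 * α ^ 3,
      1 - 4 * α + 6 * α ^ 2 - 4 * α ^ 3, 2 + 8 * α + 4 * α ^ 3,
      1 + 16 * α + 54 * α ^ 2 + 60 * α ^ 3 + 26 * α ^ 4,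
      4 * α + 42 * α ^ 2 + 116 * α ^ 3 + 96 * α ^ 4, 6 * α ^ 2 + 44 * α ^ 3 + 72 * α ^ 4,
      4 * α ^ 3 + 16 * α ^ 4, α ^ 4]]
  · simp only [NNReal.coe_one, one_pow, mul_one, Fin.sum_univ_succ, Fin.sum_univ_zero,
      Matrix.cons_val_zero, Matrix.cons_val_succ]
    ring
  · intro n
    simp only [Fin.sum_univ_succ, Fin.sum_univ_zero, Matrix.cons_val_zero, Matrix.cons_val_succ,
      Fin.val_zero, Fin.val_succ, cast_descFactorial_eq_prod, prod_range_succ, prod_range_zero]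
    push_cast
    ring

lemma exists_root_quartic_mem_Icc :
    ∃ α ∈ Set.Icc (-3 / 50 : ℝ) (-1 / 20),
      200 * α ^ 4 + 224 * α ^ 3 + 96 * α ^ 2 + 24 * α + 1 = 0 :=
  intermediate_value_Icc (by norm_num) (by fun_prop) ⟨by norm_num, by norm_num⟩

theorem poisson_counterexample_moments_general
    {Ω : Type*} [MeasurableSpace Ω] (μ : Measure Ω)
    (N : Ω → ℕ) (hN : Measurable N)
    (hlaw : ∀ k : ℕ, μ {ω | N ω = k} = ENNReal.ofReal (Real.exp (-1) / k.factorial))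
    (U V : Ω → ℝ) (hU : U = fun ω => (N ω : ℝ) - 1)
    (hV : V = fun ω => ((N ω : ℝ) - 1) ^ 2 - N ω) :
    ∃ α : ℝ, ∀ S : Ω → ℝ,
      S = (fun ω => (U ω + α * V ω) / Real.sqrt (1 + 2 * α ^ 2)) →
        (∫ ω, S ω ^ 2 ∂μ) = 1 ∧ (∫ ω, S ω ^ 4 ∂μ) = 3
        ∧ (∫ ω, S ω ^ 3 ∂μ) ≠ 0 := by
  obtain ⟨α, ⟨hα_lower, hα_upper⟩, hroot⟩ := exists_root_quartic_mem_Icc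
  refine ⟨α, fun S hS ↦ ?_⟩
  have hN_law : HasLaw N Po(1) μ :=
    hasLaw_poissonMeasure_of_measure_eq hN fun k ↦ by simpa using hlaw k
  have moment (j : ℕ) : ∫ ω, S ω ^ j ∂μ
      = (∫ n, ((n - 1 : ℝ) + α * ((n - 1 : ℝ) ^ 2 - n)) ^ j ∂Po(1)) / √(1 + 2 * α ^ 2) ^ j := by
    rw [← integral_div, ← hN_law.integral_comp .of_discrete]
    simp [hS, hU, hV, div_pow]
  have hsqrt_sq : √(1 + 2 * α ^ 2) ^ 2 = 1 + 2 * α ^ 2 := sq_sqrt (by positivity)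
  refine ⟨?_, ?_, ?_⟩
  · rw [moment, integral_sq_poissonMeasure_one, hsqrt_sq, div_self (by positivity)]
  · have hsqrt_pow_four : √(1 + 2 * α ^ 2) ^ 4 = (1 + 2 * α ^ 2) ^ 2 :=
      (pow_mul _ 2 2).trans (by rw [hsqrt_sq])
    rw [moment, integral_pow_four_poissonMeasure_one, hsqrt_pow_four,
      div_eq_iff (by positivity)]
    linear_combination hroot
  · rw [moment, integral_pow_three_poissonMeasure_one]
    have hW3_pos : 0 < 1 + 6 * α + 12 * α ^ 2 + 12 * α ^ 3 := by nlinarith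
    exact (div_pos hW3_pos (by positivity)).ne'

/-- If `N ∼ Poisson(1)`, `U = N − 1` and `V = (N − 1)² − N`, then there is a
real `α*` such that `S = (U + α*V)/√(1 + 2α*²)` satisfies `E[S²] = 1`,
`E[S⁴] = 3` and `E[S³] ≠ 0`. -/
theorem poisson_counterexample_moments
    {Ω : Type*} [MeasurableSpace Ω] (μ : Measure Ω) [IsProbabilityMeasure μ]
    (N : Ω → ℕ) (hN : Measurable N)
    (hlaw : ∀ k : ℕ, μ {ω | N ω = k} = ENNReal.ofReal (Real.exp (-1) / k.factorial))
    (U V : Ω → ℝ) (hU : U = fun ω => (N ω : ℝ) - 1)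
    (hV : V = fun ω => ((N ω : ℝ) - 1) ^ 2 - N ω) :
    ∃ α : ℝ, ∀ S : Ω → ℝ,
      S = (fun ω => (U ω + α * V ω) / Real.sqrt (1 + 2 * α ^ 2)) →
        (∫ ω, S ω ^ 2 ∂μ) = 1 ∧ (∫ ω, S ω ^ 4 ∂μ) = 3
        ∧ (∫ ω, S ω ^ 3 ∂μ) ≠ 0 :=
  poisson_counterexample_moments_general μ N hN hlaw U V hU hV
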